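/- arXiv:0704.1259 — 4 statements merged into one kernel-verified Lean document; each statement's English description precedes it below -/
import Mathlib

section
/- Let H ∈ (0,1), let d ≥ 2 be an integer and T > 0. The integral ∫₀^T ∫₀^T (s^{2H} + t^{2H})^{-d/2} ds dt is finite if and only if H*d < 2. -/
open MeasureTheory Real

lemma aux_lint_rpow_ne_top (q : ℝ) (hq : -1 < q) (T : ℝ) (hT : 0 < T) :
    ∫⁻ x in Set.Ioo (0:ℝ) T, ENNReal.ofReal (x ^ q) ≠ ⊤ := by
  rw [lintegral_ofReal_ne_top_iff_integrable ?_ ?_]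
  · exact (intervalIntegral.integrableOn_Ioo_rpow_iff hT).2 hq
  · fun_prop
  · filter_upwards [ae_restrict_mem measurableSet_Ioo] with x hx
    exact rpow_nonneg hx.1.le q

lemma aux_lint_rpow_eq_top (q : ℝ) (hq : q ≤ -1) (T : ℝ) (hT : 0 < T) :
    ∫⁻ x in Set.Ioo (0:ℝ) T, ENNReal.ofReal (x ^ q) = ⊤ := by
  by_contra h
  have h' : ∫⁻ x in Set.Ioo (0:ℝ) T, ENNReal.ofReal (x ^ q) ≠ ⊤ := h
  rw [lintegral_ofReal_ne_top_iff_integrable ?_ ?_] at h'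
  · exact absurd ((intervalIntegral.integrableOn_Ioo_rpow_iff hT).1 h') (by linarith)
  · fun_prop
  · filter_upwards [ae_restrict_mem measurableSet_Ioo] with x hx
    exact rpow_nonneg hx.1.le q

/-- For `H ∈ (0,1)`, an integer `d ≥ 2` and `T > 0`, the integral
`∫₀^T ∫₀^T (s^{2H} + t^{2H})^{-d/2} ds dt` is finite if and only if `H * d < 2`. -/
theorem integral_lam_rpow_lt_top_iff (H : ℝ) (hH : H ∈ Set.Ioo (0 : ℝ) 1) (d : ℕ)
    (hd : 2 ≤ d) (T : ℝ) (hT : 0 < T) :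
    (∫⁻ t in Set.Ioo (0 : ℝ) T, ∫⁻ s in Set.Ioo (0 : ℝ) T,
        ENNReal.ofReal (s ^ (2 * H) + t ^ (2 * H)) ^ (-(d : ℝ) / 2)) < ⊤ ↔
      H * d < 2 := by
  obtain ⟨hH0, hH1⟩ := hH
  have hd2 : (2:ℝ) ≤ (d:ℝ) := by exact_mod_cast hd
  set q : ℝ := -(d:ℝ) / 2 with hqdef
  have hqneg : q ≤ 0 := by rw [hqdef]; linarith
  set p : ℝ := H * d with hpdef
  have hp0 : 0 < p := by positivity
  constructor
  · -- finite → H*d < 2, by contraposition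
    intro hfin
    by_contra hge
    push_neg at hge
    have key : ∀ t ∈ Set.Ioo (0:ℝ) T,
        ENNReal.ofReal ((2:ℝ) ^ q) * ENNReal.ofReal (t ^ (1 - p)) ≤
          ∫⁻ s in Set.Ioo (0 : ℝ) T,
            ENNReal.ofReal (s ^ (2 * H) + t ^ (2 * H)) ^ q := by
      intro t ht
      obtain ⟨ht0, htT⟩ := ht
      calc ENNReal.ofReal ((2:ℝ) ^ q) * ENNReal.ofReal (t ^ (1 - p))
          = ENNReal.ofReal ((2 * t ^ (2*H)) ^ q) * ENNReal.ofReal t := by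
            rw [← ENNReal.ofReal_mul (by positivity), ← ENNReal.ofReal_mul (by positivity)]
            congr 1
            rw [Real.mul_rpow (by norm_num) (by positivity), ← Real.rpow_mul ht0.le,
              mul_assoc, ← Real.rpow_add_one ht0.ne']
            rw [show 2 * H * q + 1 = 1 - p by rw [hqdef, hpdef]; ring]
        _ = ∫⁻ _ in Set.Ioo (0:ℝ) t, ENNReal.ofReal ((2 * t ^ (2*H)) ^ q) := by
            rw [setLIntegral_const, Real.volume_Ioo, sub_zero]
        _ ≤ ∫⁻ s in Set.Ioo (0:ℝ) t,
              ENNReal.ofReal (s ^ (2 * H) + t ^ (2 * H)) ^ q := by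
            apply lintegral_mono_ae
            filter_upwards [ae_restrict_mem measurableSet_Ioo] with s hs
            obtain ⟨hs0, hst⟩ := hs
            have hsum : 0 < s ^ (2*H) + t ^ (2*H) := by positivity
            rw [ENNReal.ofReal_rpow_of_pos hsum]
            apply ENNReal.ofReal_le_ofReal
            apply Real.rpow_le_rpow_of_nonpos hsum _ hqneg
            have : s ^ (2*H) ≤ t ^ (2*H) :=
              Real.rpow_le_rpow hs0.le hst.le (by positivity)
            linarith
        _ ≤ ∫⁻ s in Set.Ioo (0:ℝ) T,
              ENNReal.ofReal (s ^ (2 * H) + t ^ (2 * H)) ^ q :=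
            lintegral_mono_set (Set.Ioo_subset_Ioo le_rfl htT.le)
    have htop : (∫⁻ t in Set.Ioo (0 : ℝ) T, ∫⁻ s in Set.Ioo (0 : ℝ) T,
        ENNReal.ofReal (s ^ (2 * H) + t ^ (2 * H)) ^ q) = ⊤ := by
      rw [eq_top_iff]
      calc (⊤ : ENNReal)
          = ENNReal.ofReal ((2:ℝ) ^ q) *
              ∫⁻ t in Set.Ioo (0:ℝ) T, ENNReal.ofReal (t ^ (1 - p)) := by
            rw [aux_lint_rpow_eq_top (1 - p) (by linarith) T hT, ENNReal.mul_top]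
            exact (ENNReal.ofReal_pos.mpr (Real.rpow_pos_of_pos two_pos q)).ne'
        _ = ∫⁻ t in Set.Ioo (0:ℝ) T,
              ENNReal.ofReal ((2:ℝ) ^ q) * ENNReal.ofReal (t ^ (1 - p)) := by
            rw [lintegral_const_mul]; fun_prop
        _ ≤ _ := by
            apply lintegral_mono_ae
            filter_upwards [ae_restrict_mem measurableSet_Ioo] with t ht
            exact key t ht
    rw [htop] at hfin
    exact absurd hfin (lt_irrefl _)
  · -- H*d < 2 → finite
    intro hlt
    have hA : (∫⁻ x in Set.Ioo (0:ℝ) T, ENNReal.ofReal (x ^ (-p/2))) ≠ ⊤ :=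
      aux_lint_rpow_ne_top _ (by linarith) T hT
    calc (∫⁻ t in Set.Ioo (0 : ℝ) T, ∫⁻ s in Set.Ioo (0 : ℝ) T,
        ENNReal.ofReal (s ^ (2 * H) + t ^ (2 * H)) ^ q)
        ≤ ∫⁻ t in Set.Ioo (0:ℝ) T,
            (∫⁻ s in Set.Ioo (0:ℝ) T, ENNReal.ofReal (s ^ (-p/2))) *
              ENNReal.ofReal (t ^ (-p/2)) := by
          apply lintegral_mono_ae
          filter_upwards [ae_restrict_mem measurableSet_Ioo] with t ht
          obtain ⟨ht0, htT⟩ := ht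
          rw [← lintegral_mul_const _ (by fun_prop)]
          apply lintegral_mono_ae
          filter_upwards [ae_restrict_mem measurableSet_Ioo] with s hs
          obtain ⟨hs0, hsT⟩ := hs
          have hsum : 0 < s ^ (2*H) + t ^ (2*H) := by positivity
          rw [ENNReal.ofReal_rpow_of_pos hsum, ← ENNReal.ofReal_mul (by positivity)]
          apply ENNReal.ofReal_le_ofReal
          have h1 : s ^ H * t ^ H ≤ s ^ (2*H) + t ^ (2*H) := by
            have e1 : s ^ (2*H) = (s ^ H) ^ 2 := by
              rw [← Real.rpow_natCast (s ^ H) 2, ← Real.rpow_mul hs0.le]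
              norm_num [mul_comm]
            have e2 : t ^ (2*H) = (t ^ H) ^ 2 := by
              rw [← Real.rpow_natCast (t ^ H) 2, ← Real.rpow_mul ht0.le]
              norm_num [mul_comm]
            nlinarith [two_mul_le_add_sq (s ^ H) (t ^ H),
              mul_nonneg (Real.rpow_nonneg hs0.le H) (Real.rpow_nonneg ht0.le H)]
          calc (s ^ (2*H) + t ^ (2*H)) ^ q ≤ (s ^ H * t ^ H) ^ q :=
                Real.rpow_le_rpow_of_nonpos (by positivity) h1 hqneg
            _ = s ^ (-p/2) * t ^ (-p/2) := by
                rw [Real.mul_rpow (by positivity) (by positivity),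
                  ← Real.rpow_mul hs0.le, ← Real.rpow_mul ht0.le,
                  show H * q = -p/2 by rw [hqdef, hpdef]; ring]
      _ = (∫⁻ s in Set.Ioo (0:ℝ) T, ENNReal.ofReal (s ^ (-p/2))) *
            ∫⁻ t in Set.Ioo (0:ℝ) T, ENNReal.ofReal (t ^ (-p/2)) := by
          rw [lintegral_const_mul]; fun_prop
      _ < ⊤ := ENNReal.mul_lt_top hA.lt_top hA.lt_top
end

section
/- Let H ∈ (0,1), let d ≥ 2 be an integer and T > 0. If H*d ≥ 2, then ∫_{[0,T]^4} [(λ(s,t)ρ(u,v) − μ(s,t,u,v)²)^{-d/2} − (λ(s,t)ρ(u,v))^{-d/2}] ds dt du dv = +∞. -/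
open MeasureTheory Real

noncomputable section

/-- `λ(s,t) = s^{2H} + t^{2H}` (also used as `ρ(u,v) = u^{2H} + v^{2H}`). -/
def lamFun (H s t : ℝ) : ℝ := s ^ (2 * H) + t ^ (2 * H)

/-- `μ(s,t,u,v) = ½(s^{2H} + t^{2H} + u^{2H} + v^{2H} − |t−v|^{2H} − |s−u|^{2H})`. -/
def muFun (H s t u v : ℝ) : ℝ :=
  (s ^ (2 * H) + t ^ (2 * H) + u ^ (2 * H) + v ^ (2 * H)
    - |t - v| ^ (2 * H) - |s - u| ^ (2 * H)) / 2

/-! The integrand compares `det^{-d/2}` for the covariance matrix `[[λ, μ], [μ, ρ]]` with the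
same power of the product of its diagonal entries. Writing `μ = (λ + ρ - ε) / 2` with
`ε = |s - u|^{2H} + |t - v|^{2H}` gives `λρ - μ² ≤ (λ + ρ) ε / 2`, so near the diagonal
`(u, v) = (s, t)` the first term is at least a constant times
`max(|s - u|, |t - v|)^{-Hd} ≥ max(|s - u|, |t - v|)^{-2}`, which is not integrable in two
dimensions, while the second term stays bounded. Hence the inner double integral is infinite at
every interior point `(s, t)`. -/

open Set
open scoped ENNReal

lemma ENNReal.rpow_le_rpow_of_nonpos {x y : ℝ≥0∞} {z : ℝ} (hz : z ≤ 0) (hxy : x ≤ y) :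
    y ^ z ≤ x ^ z := by
  obtain ⟨w, rfl⟩ : ∃ w, z = -w := ⟨-z, (neg_neg z).symm⟩
  rw [ENNReal.rpow_neg, ENNReal.rpow_neg]
  exact ENNReal.inv_le_inv.2 (ENNReal.rpow_le_rpow hxy (neg_nonpos.1 hz))

section Lintegral

variable {α β : Type*} [MeasurableSpace α] [MeasurableSpace β]
  {μ : Measure α} {ν : Measure β} {K : ℝ≥0∞}

lemma lintegral_sub_const_eq_top [IsFiniteMeasure μ] {f : α → ℝ≥0∞}
    (hf : ∫⁻ x, f x ∂μ = ⊤) (hK : K ≠ ⊤) : ∫⁻ x, f x - K ∂μ = ⊤ := by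
  have h := lintegral_sub_le (fun _ ↦ K) f measurable_const (μ := μ)
  rwa [hf, lintegral_const, ENNReal.top_sub (ENNReal.mul_ne_top hK (measure_ne_top _ _)),
    top_le_iff] at h

lemma lintegral_lintegral_sub_const_eq_top [IsFiniteMeasure μ] [IsFiniteMeasure ν]
    {f : α → β → ℝ≥0∞} (hf : ∫⁻ x, ∫⁻ y, f x y ∂ν ∂μ = ⊤) (hK : K ≠ ⊤) :
    ∫⁻ x, ∫⁻ y, f x y - K ∂ν ∂μ = ⊤ := by
  refine top_unique ?_
  calc ⊤ = ∫⁻ x, (∫⁻ y, f x y ∂ν) - ∫⁻ _, K ∂ν ∂μ := by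
        rw [lintegral_const]
        exact (lintegral_sub_const_eq_top hf (ENNReal.mul_ne_top hK (measure_ne_top _ _))).symm
    _ ≤ ∫⁻ x, ∫⁻ y, f x y - K ∂ν ∂μ :=
        lintegral_mono fun x ↦ lintegral_sub_le _ _ measurable_const

lemma setLIntegral_eq_top_of_forall_eq_top {s : Set α} {f : α → ℝ≥0∞} (hs : MeasurableSet s)
    (hμs : μ s ≠ 0) (hf : ∀ x ∈ s, f x = ⊤) : ∫⁻ x in s, f x ∂μ = ⊤ := by
  rw [setLIntegral_congr_fun hs hf, setLIntegral_const, ENNReal.top_mul hμs]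

end Lintegral

lemma lintegral_Ioo_ofReal_div_sub_left_eq_top {a b c : ℝ} (hab : a < b) (hc : 0 < c) :
    ∫⁻ u in Ioo a b, ENNReal.ofReal (c / (u - a)) = ⊤ := by
  by_contra hfin
  have hnonneg : 0 ≤ᵐ[volume.restrict (Ioo a b)] fun u ↦ c / (u - a) :=
    (ae_restrict_mem measurableSet_Ioo).mono fun u hu ↦ div_nonneg hc.le (sub_nonneg.2 hu.1.le)
  have hint : IntegrableOn (fun u ↦ c / (u - a)) (Ioo a b) :=
    ⟨(by fun_prop : Measurable fun u ↦ c / (u - a)).aestronglyMeasurable,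
      (hasFiniteIntegral_iff_ofReal hnonneg).2 (lt_top_iff_ne_top.2 hfin)⟩
  have hinv : IntervalIntegrable (fun u ↦ (u - a)⁻¹) volume a b := by
    rw [intervalIntegrable_iff_integrableOn_Ioo_of_le hab.le]
    refine IntegrableOn.congr_fun (hint.const_mul c⁻¹) (fun u _ ↦ ?_) measurableSet_Ioo
    field_simp
  simp [hab.ne, left_mem_uIcc] at hinv

lemma lintegral_lintegral_ofReal_div_max_sq_eq_top {s t δ c : ℝ} (hδ : 0 < δ) (hc : 0 < c) :
    ∫⁻ u in Ioo s (s + δ), ∫⁻ v in Icc t (t + δ),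
      ENNReal.ofReal (c / max (u - s) (v - t) ^ 2) = ⊤ := by
  refine top_unique ?_
  calc ⊤ = ∫⁻ u in Ioo s (s + δ), ENNReal.ofReal (c / (u - s)) :=
        (lintegral_Ioo_ofReal_div_sub_left_eq_top (by linarith) hc).symm
    _ ≤ _ := setLIntegral_mono' measurableSet_Ioo fun u hu ↦ ?_
  have hus : 0 < u - s := sub_pos.2 hu.1
  calc ENNReal.ofReal (c / (u - s))
      = ∫⁻ v in Icc t (t + (u - s)), ENNReal.ofReal (c / (u - s) ^ 2) := by
        rw [setLIntegral_const, Real.volume_Icc, add_sub_cancel_left,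
          ← ENNReal.ofReal_mul (by positivity)]
        congr 1
        field_simp
    _ = ∫⁻ v in Icc t (t + (u - s)), ENNReal.ofReal (c / max (u - s) (v - t) ^ 2) :=
        setLIntegral_congr_fun measurableSet_Icc fun v hv ↦ by
          rw [max_eq_left (by linarith [hv.2])]
    _ ≤ _ := lintegral_mono_set (Icc_subset_Icc_right (by linarith [hu.2]))

lemma div_sq_le_mul_rpow_rpow_neg {c M H : ℝ} {d : ℕ} (hc : 0 < c) (hM0 : 0 < M) (hM1 : M ≤ 1)
    (hHd : 2 ≤ H * d) : c ^ (-(d : ℝ) / 2) / M ^ 2 ≤ (c * M ^ (2 * H)) ^ (-(d : ℝ) / 2) := by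
  have hMd : (M ^ 2)⁻¹ ≤ M ^ (-(H * d)) := by
    rw [← rpow_natCast, ← rpow_neg hM0.le]
    exact rpow_le_rpow_of_exponent_ge hM0 hM1 (by push_cast; linarith)
  calc c ^ (-(d : ℝ) / 2) / M ^ 2 ≤ c ^ (-(d : ℝ) / 2) * M ^ (-(H * d)) := by
        rw [div_eq_mul_inv]
        gcongr
    _ = (c * M ^ (2 * H)) ^ (-(d : ℝ) / 2) := by
        rw [mul_rpow hc.le (by positivity), ← rpow_mul hM0.le]
        ring_nf

section Covariance

variable {H s t u v : ℝ}

def covDet (H s t u v : ℝ) : ℝ := lamFun H s t * lamFun H u v - muFun H s t u v ^ 2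

def detIntegrand (H : ℝ) (d : ℕ) (s t u v : ℝ) : ℝ≥0∞ :=
  ENNReal.ofReal (covDet H s t u v) ^ (-(d : ℝ) / 2)
    - ENNReal.ofReal (lamFun H s t * lamFun H u v) ^ (-(d : ℝ) / 2)

lemma lamFun_pos (hs : 0 < s) (ht : 0 ≤ t) : 0 < lamFun H s t :=
  add_pos_of_pos_of_nonneg (rpow_pos_of_pos hs _) (rpow_nonneg ht _)

lemma lamFun_nonneg (hs : 0 ≤ s) (ht : 0 ≤ t) : 0 ≤ lamFun H s t :=
  add_nonneg (rpow_nonneg hs _) (rpow_nonneg ht _)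

lemma lamFun_le_lamFun {s' t' : ℝ} (hH : 0 ≤ H) (hs : 0 ≤ s) (hss' : s ≤ s') (ht : 0 ≤ t)
    (htt' : t ≤ t') : lamFun H s t ≤ lamFun H s' t' :=
  add_le_add (rpow_le_rpow hs hss' (by positivity)) (rpow_le_rpow ht htt' (by positivity))

lemma muFun_eq : muFun H s t u v =
    (lamFun H s t + lamFun H u v - (|s - u| ^ (2 * H) + |t - v| ^ (2 * H))) / 2 := by
  unfold muFun lamFun
  ring

lemma covDet_le : covDet H s t u v ≤
    (lamFun H s t + lamFun H u v) / 2 * (|s - u| ^ (2 * H) + |t - v| ^ (2 * H)) := by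
  set ε := |s - u| ^ (2 * H) + |t - v| ^ (2 * H)
  have : covDet H s t u v = (lamFun H s t + lamFun H u v) / 2 * ε
      - ((lamFun H s t - lamFun H u v) ^ 2 + ε ^ 2) / 4 := by
    rw [covDet, muFun_eq]
    ring
  rw [this]
  nlinarith [sq_nonneg (lamFun H s t - lamFun H u v), sq_nonneg ε]

lemma covDet_le_mul_max_rpow {T : ℝ} (hH : 0 ≤ H) (hs : 0 ≤ s) (ht : 0 ≤ t) (hsu : s ≤ u)
    (htv : t ≤ v) (huT : u ≤ T) (hvT : v ≤ T) :
    covDet H s t u v ≤ 2 * lamFun H T T * max (u - s) (v - t) ^ (2 * H) := by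
  have hlam : (lamFun H s t + lamFun H u v) / 2 ≤ lamFun H T T := by
    linarith [lamFun_le_lamFun hH hs (hsu.trans huT) ht (htv.trans hvT),
      lamFun_le_lamFun hH (hs.trans hsu) huT (ht.trans htv) hvT]
  have hε : |s - u| ^ (2 * H) + |t - v| ^ (2 * H) ≤ 2 * max (u - s) (v - t) ^ (2 * H) := by
    rw [abs_sub_comm s, abs_sub_comm t, abs_of_nonneg (sub_nonneg.2 hsu),
      abs_of_nonneg (sub_nonneg.2 htv)]
    have h2H : 0 ≤ 2 * H := by positivity
    linarith [rpow_le_rpow (sub_nonneg.2 hsu) (le_max_left _ (v - t)) h2H,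
      rpow_le_rpow (sub_nonneg.2 htv) (le_max_right (u - s) _) h2H]
  calc covDet H s t u v
      ≤ (lamFun H s t + lamFun H u v) / 2 * (|s - u| ^ (2 * H) + |t - v| ^ (2 * H)) := covDet_le
    _ ≤ lamFun H T T * (2 * max (u - s) (v - t) ^ (2 * H)) := by
        gcongr
        linarith [lamFun_nonneg (H := H) hs ht,
          lamFun_nonneg (H := H) (hs.trans hsu) (ht.trans htv)]
    _ = 2 * lamFun H T T * max (u - s) (v - t) ^ (2 * H) := by ring

lemma ofReal_div_max_sq_sub_le_detIntegrand {d : ℕ} {T : ℝ} (hHd : 2 ≤ H * d) (hs : 0 < s)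
    (ht : 0 ≤ t) (hsu : s < u) (htv : t ≤ v) (huT : u ≤ T) (hvT : v ≤ T)
    (hM : max (u - s) (v - t) ≤ 1) :
    ENNReal.ofReal ((2 * lamFun H T T) ^ (-(d : ℝ) / 2) / max (u - s) (v - t) ^ 2)
      - ENNReal.ofReal (lamFun H s t ^ 2) ^ (-(d : ℝ) / 2) ≤ detIntegrand H d s t u v := by
  have hH : 0 ≤ H := by nlinarith [(d.cast_nonneg : (0 : ℝ) ≤ d)]
  have hexp : -(d : ℝ) / 2 ≤ 0 :=
    div_nonpos_of_nonpos_of_nonneg (neg_nonpos.2 d.cast_nonneg) zero_le_two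
  have hM0 : 0 < max (u - s) (v - t) := lt_max_of_lt_left (sub_pos.2 hsu)
  have hlam_st := lamFun_pos (H := H) hs ht
  have hlam_T : 0 < 2 * lamFun H T T := by
    have := lamFun_pos (H := H) (hs.trans (hsu.trans_le huT)) (ht.trans (htv.trans hvT))
    positivity
  refine tsub_le_tsub ?_ ?_
  · calc ENNReal.ofReal ((2 * lamFun H T T) ^ (-(d : ℝ) / 2) / max (u - s) (v - t) ^ 2)
        ≤ ENNReal.ofReal ((2 * lamFun H T T * max (u - s) (v - t) ^ (2 * H)) ^ (-(d : ℝ) / 2)) :=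
          ENNReal.ofReal_le_ofReal (div_sq_le_mul_rpow_rpow_neg hlam_T hM0 hM hHd)
      _ = ENNReal.ofReal (2 * lamFun H T T * max (u - s) (v - t) ^ (2 * H)) ^ (-(d : ℝ) / 2) :=
          (ENNReal.ofReal_rpow_of_pos (by positivity)).symm
      _ ≤ ENNReal.ofReal (covDet H s t u v) ^ (-(d : ℝ) / 2) :=
          ENNReal.rpow_le_rpow_of_nonpos hexp <| ENNReal.ofReal_le_ofReal <|
            covDet_le_mul_max_rpow hH hs.le ht hsu.le htv huT hvT
  · refine ENNReal.rpow_le_rpow_of_nonpos hexp (ENNReal.ofReal_le_ofReal ?_)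
    rw [sq]
    exact mul_le_mul_of_nonneg_left (lamFun_le_lamFun hH hs.le hsu.le ht htv) hlam_st.le

end Covariance

lemma lintegral_lintegral_detIntegrand_eq_top {H T s t : ℝ} {d : ℕ} (hHd : 2 ≤ H * d)
    (hs : 0 < s) (hsT : s < T) (ht : 0 ≤ t) (htT : t < T) :
    ∫⁻ u in Icc 0 T, ∫⁻ v in Icc 0 T, detIntegrand H d s t u v = ⊤ := by
  set δ := min (min (T - s) (T - t)) 1
  have hδ : 0 < δ := lt_min (lt_min (sub_pos.2 hsT) (sub_pos.2 htT)) one_pos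
  have hδs : δ ≤ T - s := (min_le_left _ _).trans (min_le_left _ _)
  have hδt : δ ≤ T - t := (min_le_left _ _).trans (min_le_right _ _)
  have hδ1 : δ ≤ 1 := min_le_right _ _
  have hK : ENNReal.ofReal (lamFun H s t ^ 2) ^ (-(d : ℝ) / 2) ≠ ⊤ :=
    ENNReal.rpow_ne_top_of_ne_zero (ENNReal.ofReal_pos.2 (pow_pos (lamFun_pos hs ht) 2)).ne'
      ENNReal.ofReal_ne_top
  have hc : 0 < (2 * lamFun H T T) ^ (-(d : ℝ) / 2) :=
    rpow_pos_of_pos (by linarith [lamFun_pos (H := H) (hs.trans hsT) (ht.trans htT.le)]) _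
  refine top_unique ?_
  calc ⊤ = ∫⁻ u in Ioo s (s + δ), ∫⁻ v in Icc t (t + δ),
        ENNReal.ofReal ((2 * lamFun H T T) ^ (-(d : ℝ) / 2) / max (u - s) (v - t) ^ 2)
          - ENNReal.ofReal (lamFun H s t ^ 2) ^ (-(d : ℝ) / 2) :=
        (lintegral_lintegral_sub_const_eq_top
          (lintegral_lintegral_ofReal_div_max_sq_eq_top hδ hc) hK).symm
    _ ≤ ∫⁻ u in Ioo s (s + δ), ∫⁻ v in Icc t (t + δ), detIntegrand H d s t u v :=
        setLIntegral_mono' measurableSet_Ioo fun u hu ↦ setLIntegral_mono' measurableSet_Icc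
          fun v hv ↦ ofReal_div_max_sq_sub_le_detIntegrand hHd hs ht hu.1 hv.1
            (by linarith [hu.2]) (by linarith [hv.2])
            (max_le (by linarith [hu.2]) (by linarith [hv.2]))
    _ ≤ ∫⁻ u in Icc 0 T, ∫⁻ v in Icc 0 T, detIntegrand H d s t u v :=
        (lintegral_mono_set (Ioo_subset_Icc_self.trans (Icc_subset_Icc hs.le (by linarith)))).trans
          (lintegral_mono fun u ↦ lintegral_mono_set (Icc_subset_Icc ht (by linarith)))

theorem integral_det_rpow_sub_eq_top_general (H : ℝ) (d : ℕ) (T : ℝ) (hT : 0 < T) (hHd : 2 ≤ H * d) :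
    (∫⁻ s in Set.Icc (0 : ℝ) T, ∫⁻ t in Set.Icc (0 : ℝ) T,
        ∫⁻ u in Set.Icc (0 : ℝ) T, ∫⁻ v in Set.Icc (0 : ℝ) T,
          ENNReal.ofReal (lamFun H s t * lamFun H u v - muFun H s t u v ^ 2)
              ^ (-(d : ℝ) / 2)
            - ENNReal.ofReal (lamFun H s t * lamFun H u v) ^ (-(d : ℝ) / 2)) = ⊤ := by
  have hvol : volume (Ioo 0 T) ≠ 0 := by simp [hT]
  refine top_unique ?_
  calc ⊤ = ∫⁻ s in Ioo 0 T, ∫⁻ t in Ioo 0 T, ∫⁻ u in Icc 0 T, ∫⁻ v in Icc 0 T,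
        detIntegrand H d s t u v :=
        (setLIntegral_eq_top_of_forall_eq_top measurableSet_Ioo hvol fun s hs ↦
          setLIntegral_eq_top_of_forall_eq_top measurableSet_Ioo hvol fun t ht ↦
            lintegral_lintegral_detIntegrand_eq_top hHd hs.1 hs.2 ht.1.le ht.2).symm
    _ ≤ _ := (lintegral_mono_set Ioo_subset_Icc_self).trans
        (lintegral_mono fun s ↦ lintegral_mono_set Ioo_subset_Icc_self)

/-- For `H ∈ (0,1)`, an integer `d ≥ 2` and `T > 0`, if `H * d ≥ 2` then
`∫_{[0,T]⁴} [(λρ − μ²)^{-d/2} − (λρ)^{-d/2}] ds dt du dv = +∞`. -/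
theorem integral_det_rpow_sub_eq_top (H : ℝ) (hH : H ∈ Set.Ioo (0 : ℝ) 1) (d : ℕ)
    (hd : 2 ≤ d) (T : ℝ) (hT : 0 < T) (hHd : 2 ≤ H * d) :
    (∫⁻ s in Set.Icc (0 : ℝ) T, ∫⁻ t in Set.Icc (0 : ℝ) T,
        ∫⁻ u in Set.Icc (0 : ℝ) T, ∫⁻ v in Set.Icc (0 : ℝ) T,
          ENNReal.ofReal (lamFun H s t * lamFun H u v - muFun H s t u v ^ 2)
              ^ (-(d : ℝ) / 2)
            - ENNReal.ofReal (lamFun H s t * lamFun H u v) ^ (-(d : ℝ) / 2)) = ⊤ :=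
  integral_det_rpow_sub_eq_top_general H d T hT hHd

end
end

section
/- Let H ∈ (0,1). For all real t, v with 0 < v < t, one has t^{2H} v^{2H} − ¼(t^{2H} + v^{2H} − (t−v)^{2H})² > 0; that is, the covariance matrix of (B^H_t, B^H_v) for a one-dimensional fractional Brownian motion, namely the 2×2 matrix with diagonal entries t^{2H}, v^{2H} and off-diagonal entries ½(t^{2H}+v^{2H}−(t−v)^{2H}), has strictly positive determinant. -/
open MeasureTheory Real

noncomputable section

/-- Strict subadditivity of `x ↦ x^H` for `0 < H < 1`. -/
lemma rpow_strict_subadd {H x y : ℝ} (hH0 : 0 < H) (hH1 : H < 1) (hx : 0 < x) (hy : 0 < y) :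
    (x + y) ^ H < x ^ H + y ^ H := by
  have hxy : 0 < x + y := by linarith
  have h1 : (x + y) ^ H = x * (x + y) ^ (H - 1) + y * (x + y) ^ (H - 1) := by
    rw [← add_mul]
    have : (x + y) ^ H = (x + y) ^ (1 + (H - 1)) := by ring_nf
    rw [this, Real.rpow_add hxy, Real.rpow_one]
  have hz : H - 1 < 0 := by linarith
  have hx' : (x + y) ^ (H - 1) < x ^ (H - 1) :=
    Real.rpow_lt_rpow_of_neg hx (by linarith) hz
  have hy' : (x + y) ^ (H - 1) < y ^ (H - 1) :=
    Real.rpow_lt_rpow_of_neg hy (by linarith) hz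
  have hxH : x * x ^ (H - 1) = x ^ H := by
    have : x ^ H = x ^ (1 + (H - 1)) := by ring_nf
    rw [this, Real.rpow_add hx, Real.rpow_one]
  have hyH : y * y ^ (H - 1) = y ^ H := by
    have : y ^ H = y ^ (1 + (H - 1)) := by ring_nf
    rw [this, Real.rpow_add hy, Real.rpow_one]
  calc (x + y) ^ H = x * (x + y) ^ (H - 1) + y * (x + y) ^ (H - 1) := h1
    _ < x * x ^ (H - 1) + y * y ^ (H - 1) := by
        apply add_lt_add
        · exact (mul_lt_mul_iff_right₀ hx).mpr hx'
        · exact (mul_lt_mul_iff_right₀ hy).mpr hy'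
    _ = x ^ H + y ^ H := by rw [hxH, hyH]

/-- `φ(t,v) = t^{2H} v^{2H} − ¼(t^{2H} + v^{2H} − |t−v|^{2H})²`, the determinant of the
covariance matrix of `(B^H_t, B^H_v)` for a one-dimensional fBm with Hurst parameter `H`. -/
def phiFun (H t v : ℝ) : ℝ :=
  t ^ (2 * H) * v ^ (2 * H) - (t ^ (2 * H) + v ^ (2 * H) - |t - v| ^ (2 * H)) ^ 2 / 4

/-- For `H ∈ (0,1)` and `0 < v < t`, one has
`t^{2H} v^{2H} − ¼(t^{2H} + v^{2H} − (t−v)^{2H})² > 0`; equivalently, the covariance matrix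
of `(B^H_t, B^H_v)` (diagonal entries `t^{2H}, v^{2H}`, off-diagonal entries
`½(t^{2H}+v^{2H}−(t−v)^{2H})`) has strictly positive determinant. -/
theorem phiFun_pos (H : ℝ) (hH : H ∈ Set.Ioo (0 : ℝ) 1) (t v : ℝ) (hv : 0 < v) (hvt : v < t) :
    0 < t ^ (2 * H) * v ^ (2 * H)
        - (t ^ (2 * H) + v ^ (2 * H) - (t - v) ^ (2 * H)) ^ 2 / 4 ∧
      0 < Matrix.det
        !![t ^ (2 * H), (t ^ (2 * H) + v ^ (2 * H) - (t - v) ^ (2 * H)) / 2;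
           (t ^ (2 * H) + v ^ (2 * H) - (t - v) ^ (2 * H)) / 2, v ^ (2 * H)] := by
  obtain ⟨hH0, hH1⟩ := hH
  have ht : 0 < t := hv.trans hvt
  have hw : 0 < t - v := by linarith
  set a := t ^ H with ha
  set b := v ^ H with hb
  set c := (t - v) ^ H with hc
  have hapos : 0 < a := Real.rpow_pos_of_pos ht H
  have hbpos : 0 < b := Real.rpow_pos_of_pos hv H
  have hcpos : 0 < c := Real.rpow_pos_of_pos hw H
  have hta : t ^ (2 * H) = a ^ 2 := by
    rw [ha, ← Real.rpow_natCast (t ^ H) 2, ← Real.rpow_mul ht.le]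
    norm_num; ring_nf
  have htb : v ^ (2 * H) = b ^ 2 := by
    rw [hb, ← Real.rpow_natCast (v ^ H) 2, ← Real.rpow_mul hv.le]
    norm_num; ring_nf
  have htc : (t - v) ^ (2 * H) = c ^ 2 := by
    rw [hc, ← Real.rpow_natCast ((t - v) ^ H) 2, ← Real.rpow_mul hw.le]
    norm_num; ring_nf
  -- strict subadditivity: a < b + c (since t = v + (t-v))
  have hsub : a < b + c := by
    have := rpow_strict_subadd hH0 hH1 hv hw
    rw [ha]
    have hvt' : v + (t - v) = t := by ring
    rw [← hvt']
    exact this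
  -- b ≤ a since v < t and H > 0
  have hba : b < a := Real.rpow_lt_rpow hv.le hvt hH0
  -- c < a + b since t - v < t
  have hca : c < a := Real.rpow_lt_rpow hw.le (by linarith) hH0
  have hcab : c < a + b := by linarith
  -- thus (a - b)^2 < c^2 < (a+b)^2
  have key : 0 < a ^ 2 * b ^ 2 - (a ^ 2 + b ^ 2 - c ^ 2) ^ 2 / 4 := by
    have h1 : 0 < a + b - c := by linarith
    have h2 : 0 < a + b + c := by linarith
    have h3 : 0 < c - a + b := by linarith
    have h4 : 0 < c + a - b := by linarith
    have hprod : 0 < (a + b - c) * (a + b + c) * (c - a + b) * (c + a - b) :=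
      mul_pos (mul_pos (mul_pos h1 h2) h3) h4
    nlinarith [hprod]
  have hdet : 0 < t ^ (2 * H) * v ^ (2 * H)
      - (t ^ (2 * H) + v ^ (2 * H) - (t - v) ^ (2 * H)) ^ 2 / 4 := by
    rw [hta, htb, htc]; exact key
  refine ⟨hdet, ?_⟩
  rw [Matrix.det_fin_two_of]
  calc (0:ℝ) < t ^ (2 * H) * v ^ (2 * H)
      - (t ^ (2 * H) + v ^ (2 * H) - (t - v) ^ (2 * H)) ^ 2 / 4 := hdet
    _ = _ := by ring
end
end

section
/- Let H ∈ (0,1). For all s, t, u, v with 0 < v < t and 0 < u < s, one has λ(s,t)ρ(u,v) − μ(s,t,u,v)² ≥ φ(t,v) + φ(s,u). -/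
open MeasureTheory Real

noncomputable section

/-- Subadditivity of `x ^ H` for `0 ≤ H ≤ 1`. -/
lemma rpow_add_le_add_rpow' {H : ℝ} (hH0 : 0 ≤ H) (hH1 : H ≤ 1) {x y : ℝ}
    (hx : 0 ≤ x) (hy : 0 ≤ y) : (x + y) ^ H ≤ x ^ H + y ^ H := by
  lift x to NNReal using hx
  lift y to NNReal using hy
  have := NNReal.rpow_add_le_add_rpow x y hH0 hH1
  push_cast [← NNReal.coe_rpow] at this ⊢
  exact_mod_cast this

lemma sq_rpow (x H : ℝ) (hx : 0 ≤ x) : x ^ (2 * H) = (x ^ H) ^ 2 := by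
  rw [← Real.rpow_natCast (x ^ H) 2, ← Real.rpow_mul hx]
  norm_num [mul_comm]

set_option maxHeartbeats 1000000 in
/-- For `H ∈ (0,1)` and `0 < v < t`, `0 < u < s`, one has
`λ(s,t)ρ(u,v) − μ(s,t,u,v)² ≥ φ(t,v) + φ(s,u)`. -/
theorem det_ge_phi_add_phi (H : ℝ) (hH : H ∈ Set.Ioo (0 : ℝ) 1) (s t u v : ℝ)
    (hv : 0 < v) (hvt : v < t) (hu : 0 < u) (hus : u < s) :
    phiFun H t v + phiFun H s u ≤ lamFun H s t * lamFun H u v - muFun H s t u v ^ 2 := by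
  obtain ⟨hH0, hH1⟩ := hH
  have ht : 0 < t := hv.trans hvt
  have hs : 0 < s := hu.trans hus
  have htv : (0:ℝ) ≤ t - v := by linarith
  have hsu : (0:ℝ) ≤ s - u := by linarith
  unfold phiFun lamFun muFun
  rw [abs_of_nonneg htv, abs_of_nonneg hsu,
    sq_rpow s H hs.le, sq_rpow t H ht.le, sq_rpow u H hu.le, sq_rpow v H hv.le,
    sq_rpow _ H htv, sq_rpow _ H hsu]
  set A := s ^ H with hA
  set B := t ^ H with hB
  set C := u ^ H with hC
  set D := v ^ H with hD
  set X := (t - v) ^ H with hX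
  set Y := (s - u) ^ H with hY
  clear_value A B C D X Y
  have hApos : 0 < A := hA ▸ Real.rpow_pos_of_pos hs _
  
  have hBpos : 0 < B := hB ▸ Real.rpow_pos_of_pos ht _
  have hCpos : 0 < C := hC ▸ Real.rpow_pos_of_pos hu _
  have hDpos : 0 < D := hD ▸ Real.rpow_pos_of_pos hv _
  have hX0 : 0 ≤ X := hX ▸ Real.rpow_nonneg htv _
  have hY0 : 0 ≤ Y := hY ▸ Real.rpow_nonneg hsu _
  -- X ≤ B  and  B - D ≤ X (subadditivity)
  have hXB : X ≤ B := hX ▸ hB ▸ Real.rpow_le_rpow htv (by linarith) hH0.le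
  have hYA : Y ≤ A := hY ▸ hA ▸ Real.rpow_le_rpow hsu (by linarith) hH0.le
  have hBX : B ≤ D + X := by
    have := rpow_add_le_add_rpow' hH0.le hH1.le hv.le htv
    rw [show v + (t - v) = t by ring, ← hB, ← hD, ← hX] at this
    linarith
  have hAY : A ≤ C + Y := by
    have := rpow_add_le_add_rpow' hH0.le hH1.le hu.le hsu
    rw [show u + (s - u) = s by ring, ← hA, ← hC, ← hY] at this
    linarith
  have hDB : D ≤ B := hD ▸ hB ▸ Real.rpow_le_rpow hv.le hvt.le hH0.le
  have hCA : C ≤ A := hC ▸ hA ▸ Real.rpow_le_rpow hu.le hus.le hH0.le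
  clear hA hB hC hD hX hY hH0 hH1 htv hsu hv hvt hu hus ht hs
  -- key bounds: 0 ≤ P := B² + D² - X² ≤ 2BD ; similarly Q
  have hP1 : X ^ 2 ≤ B ^ 2 := by nlinarith
  have hP2 : (B - D) ^ 2 ≤ X ^ 2 := by
    nlinarith [mul_nonneg (by linarith : (0:ℝ) ≤ X - (B - D))
      (by linarith : (0:ℝ) ≤ X + (B - D))]
  have hQ1 : Y ^ 2 ≤ A ^ 2 := by nlinarith
  have hQ2 : (A - C) ^ 2 ≤ Y ^ 2 := by
    nlinarith [mul_nonneg (by linarith : (0:ℝ) ≤ Y - (A - C))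
      (by linarith : (0:ℝ) ≤ Y + (A - C))]
  have hP0 : 0 ≤ B ^ 2 + D ^ 2 - X ^ 2 := by nlinarith [sq_nonneg D]
  have hQ0 : 0 ≤ A ^ 2 + C ^ 2 - Y ^ 2 := by nlinarith [sq_nonneg C]
  have hPle : B ^ 2 + D ^ 2 - X ^ 2 ≤ 2 * (B * D) := by nlinarith
  have hQle : A ^ 2 + C ^ 2 - Y ^ 2 ≤ 2 * (A * C) := by nlinarith
  have hKey : (B ^ 2 + D ^ 2 - X ^ 2) * (A ^ 2 + C ^ 2 - Y ^ 2)
      ≤ 2 * (A ^ 2 * D ^ 2 + B ^ 2 * C ^ 2) := by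
    have h1 : (B ^ 2 + D ^ 2 - X ^ 2) * (A ^ 2 + C ^ 2 - Y ^ 2)
        ≤ (2 * (B * D)) * (2 * (A * C)) :=
      mul_le_mul hPle hQle hQ0 (by positivity)
    nlinarith [sq_nonneg (A * D - B * C)]
  nlinarith [hKey]
end
end
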